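/- arXiv:0905.0939 — 2 statements merged into one kernel-verified Lean document; each statement's English description precedes it below -/
import Mathlib

section
/- Let n ≥ 1, let B be a positive definite Hermitian n×n complex matrix, let C be a Hermitian n×n complex matrix, and let T > 0 be a real number such that B + T•C is positive semidefinite. Then for every t ∈ [0, T], the determinants of B + t•C and of B (which are nonnegative real numbers) satisfy det(B + t•C) ≥ ((T−t)/T)^n · det(B). -/
/-!
Write `B + t • C = ((T - t) / T) • B + (t / T) • (B + T • C)`, a positive semidefinite matrix plus
a positive semidefinite one. The determinant is monotone along such sums: factoring `A = S⋆ S`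
reduces `det A ≤ det (A + D)` to `1 ≤ det (1 + M)` with `M = S⁻⋆ D S⁻¹ ≥ 0`, whose eigenvalues are
`1 + λᵢ ≥ 1`. Finally `det (((T - t) / T) • B) = ((T - t) / T) ^ n * det B`.
-/

open scoped ComplexOrder

namespace Matrix

variable {n 𝕜 : Type*} [Fintype n] [DecidableEq n] [RCLike 𝕜]

theorem PosSemidef.one_le_det_one_add {M : Matrix n n 𝕜} (hM : M.PosSemidef) :
    1 ≤ (1 + M).det := by
  set U := hM.isHermitian.eigenvectorUnitary
  have hdet : (1 + M).det = ((∏ i, (1 + hM.isHermitian.eigenvalues i) : ℝ) : 𝕜) := by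
    conv_lhs => rw [hM.isHermitian.spectral_theorem, ← map_one (Unitary.conjStarAlgAut 𝕜 _ U),
      ← map_add, Unitary.conjStarAlgAut_apply, det_mul, det_mul, mul_right_comm, ← det_mul,
      ← Unitary.coe_star, Unitary.coe_mul_star_self, det_one, one_mul, ← diagonal_one,
      diagonal_add, det_diagonal]
    push_cast
    rfl
  rw [hdet, ← RCLike.ofReal_one, RCLike.ofReal_le_ofReal]
  exact Finset.one_le_prod fun i _ ↦ le_add_of_nonneg_right (hM.eigenvalues_nonneg i)

open scoped MatrixOrder in
theorem PosDef.det_le_det_add {A D : Matrix n n 𝕜} (hA : A.PosDef) (hD : D.PosSemidef) :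
    A.det ≤ (A + D).det := by
  obtain ⟨S, rfl⟩ := CStarAlgebra.nonneg_iff_eq_star_mul_self.mp hA.posSemidef.nonneg
  have hS : IsUnit S.det :=
    (isUnit_iff_isUnit_det S).mp (isUnit_star.mp (isUnit_of_mul_isUnit_left hA.isUnit))
  have hfactor : star S * S + D = star S * (1 + (S⁻¹)ᴴ * D * S⁻¹) * S := by
    rw [mul_add, add_mul, mul_one, ← star_eq_conjTranspose, ← mul_assoc, ← mul_assoc, ← star_mul,
      nonsing_inv_mul S hS, star_one, one_mul, mul_assoc, nonsing_inv_mul S hS, mul_one]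
  have hdet : (star S * S + D).det = (star S * S).det * (1 + (S⁻¹)ᴴ * D * S⁻¹).det := by
    rw [hfactor, det_mul, det_mul, det_mul, mul_right_comm]
  rw [hdet]
  exact le_mul_of_one_le_right hA.det_pos.le (hD.conjTranspose_mul_mul_same _).one_le_det_one_add

theorem PosSemidef.det_le_det_add {A D : Matrix n n 𝕜} (hA : A.PosSemidef) (hD : D.PosSemidef) :
    A.det ≤ (A + D).det := by
  by_cases hdet : A.det = 0
  · exact hdet ▸ (hA.add hD).det_nonneg
  · exact (hA.posDef_iff_det_ne_zero.mpr hdet).det_le_det_add hD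

end Matrix

theorem stmt_1_general (n : ℕ)
    (B C : Matrix (Fin n) (Fin n) ℂ)
    (hB : B.PosDef)
    (T : ℝ) (hT : 0 < T)
    (hBTC : (B + T • C).PosSemidef) :
    ∀ t ∈ Set.Icc (0 : ℝ) T,
      0 ≤ B.det ∧ 0 ≤ (B + t • C).det ∧
      ((((T - t) / T) ^ n : ℝ) : ℂ) * B.det ≤ (B + t • C).det := by
  rintro t ⟨ht0, htT⟩
  have hsplit : B + t • C = ((T - t) / T) • B + (t / T) • (B + T • C) := by
    rw [smul_add, smul_smul, div_mul_cancel₀ t hT.ne', ← add_assoc, ← add_smul, ← add_div,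
      sub_add_cancel, div_self hT.ne', one_smul]
  have hscaled : (((T - t) / T) • B).PosSemidef :=
    hB.posSemidef.smul (div_nonneg (sub_nonneg.mpr htT) hT.le)
  have hrest : ((t / T) • (B + T • C)).PosSemidef := hBTC.smul (div_nonneg ht0 hT.le)
  have hdet : (((T - t) / T) • B).det = ((((T - t) / T) ^ n : ℝ) : ℂ) * B.det := by
    rw [Matrix.det_smul_of_tower, Fintype.card_fin, Complex.real_smul, Complex.ofReal_pow]
  refine ⟨hB.det_pos.le, hsplit ▸ (hscaled.add hrest).det_nonneg, ?_⟩
  rw [← hdet, hsplit]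
  exact hscaled.det_le_det_add hrest

/-- If `B` is positive definite Hermitian, `C` is Hermitian, `T > 0` and
`B + T • C` is positive semidefinite, then for every `t ∈ [0, T]` the determinants of
`B + t • C` and of `B` are nonnegative real numbers (nonnegative in the order on `ℂ`,
where `0 ≤ z` means `z` is a nonnegative real) and satisfy
`det (B + t • C) ≥ ((T - t)/T)^n * det B`. -/
theorem stmt_1 (n : ℕ) (hn : 1 ≤ n)
    (B C : Matrix (Fin n) (Fin n) ℂ)
    (hB : B.PosDef) (hC : C.IsHermitian)
    (T : ℝ) (hT : 0 < T)
    (hBTC : (B + T • C).PosSemidef) :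
    ∀ t ∈ Set.Icc (0 : ℝ) T,
      0 ≤ B.det ∧ 0 ≤ (B + t • C).det ∧
      ((((T - t) / T) ^ n : ℝ) : ℂ) * B.det ≤ (B + t • C).det :=
  stmt_1_general n B C hB T hT hBTC
end

section
/- Let X be a nonempty compact topological space, let T ∈ (0, ∞), and let φ : [0, T) × X → ℝ be continuous such that the partial derivative ∂φ/∂t exists at every point of (0, T) × X and is continuous on (0, T) × X. Let f : [0, T) → ℝ be continuous, and suppose that for every t ∈ (0, T) and every x ∈ X at which φ(t, ·) attains its maximum over X, one has ∂φ/∂t(t, x) ≤ f(t). Then for every t ∈ [0, T), max_{x∈X} φ(t, x) ≤ max_{x∈X} φ(0, x) + ∫₀ᵗ f(s) ds. -/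
/-!
Hamilton's trick: let `Φ t = max_x φ t x`. If `y` maximizes `φ t`, then
`Φ t - Φ t₀ ≤ φ t y - φ t₀ y = (t - t₀) ∂φ/∂t (ξ, y)` for some `ξ ∈ (t₀, t)`. As `t ↓ t₀` the
maximizers of `φ t` accumulate only at maximizers of `φ t₀` (compactness of `X`), where
`∂φ/∂t ≤ f t₀`, so the upper right Dini derivative of `Φ` is at most `f`. A function with such a
Dini derivative bound grows no faster than a primitive of `f`.
-/

open Set Filter Topology Function

section Maximizers

variable {α X : Type*} [TopologicalSpace α] [TopologicalSpace X]

theorem Continuous.exists_ciSup_eq [CompactSpace X] [Nonempty X] {g : X → ℝ} (hg : Continuous g) :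
    ∃ x, (∀ y, g y ≤ g x) ∧ ⨆ y, g y = g x := by
  obtain ⟨x, -, hx⟩ := isCompact_univ.exists_isMaxOn univ_nonempty hg.continuousOn
  exact ⟨x, fun y => hx (mem_univ y), ciSup_eq_of_forall_le_of_forall_lt_exists_gt
    (fun y => hx (mem_univ y)) fun _ h => ⟨x, h⟩⟩

theorem continuousOn_iSup_of_compactSpace [CompactSpace X] {F : α → X → ℝ} {s : Set α}
    (hF : ContinuousOn (uncurry F) (s ×ˢ univ)) : ContinuousOn (fun t => ⨆ x, F t x) s := by
  rw [continuousOn_iff_continuous_domRestrict]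
  have hcont : Continuous fun p : s × X => F p.1 p.2 :=
    hF.comp_continuous (continuous_subtype_val.prodMap continuous_id) fun p => ⟨p.1.2, trivial⟩
  convert isCompact_univ.continuous_sSup (f := fun (t : s) x => F t x) hcont using 1
  ext t
  simp [iSup, ← image_univ]

theorem exists_isOpen_superset_eventually_lt {G : α → X → ℝ} {s : Set α} (hs : IsOpen s)
    (hG : ContinuousOn (uncurry G) (s ×ˢ univ)) {t₀ : α} (ht₀ : t₀ ∈ s) {K : Set X}
    (hK : IsCompact K) {c : ℝ} (hlt : ∀ x ∈ K, G t₀ x < c) :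
    ∃ v, IsOpen v ∧ K ⊆ v ∧ ∀ᶠ t in 𝓝 t₀, ∀ x ∈ v, G t x < c := by
  have hopen : IsOpen (s ×ˢ univ ∩ uncurry G ⁻¹' Iio c) :=
    hG.isOpen_inter_preimage (hs.prod isOpen_univ) isOpen_Iio
  obtain ⟨u, v, hu, hv, htu, hKv, huv⟩ := generalized_tube_lemma isCompact_singleton hK hopen
    (by rintro ⟨t, x⟩ ⟨rfl, hx⟩; exact ⟨⟨ht₀, trivial⟩, hlt x hx⟩)
  exact ⟨v, hv, hKv, eventually_of_mem (hu.mem_nhds (htu rfl)) fun t ht x hx =>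
    (huv (mk_mem_prod ht hx)).2⟩

theorem eventually_maximizers_subset [CompactSpace X] {F : α → X → ℝ} {s : Set α} (hs : IsOpen s)
    (hF : ContinuousOn (uncurry F) (s ×ˢ univ)) {t₀ : α} (ht₀ : t₀ ∈ s) {v : Set X}
    (hv : IsOpen v) (hmax : ∀ x, (∀ y, F t₀ y ≤ F t₀ x) → x ∈ v) :
    ∀ᶠ t in 𝓝 t₀, ∀ x, (∀ y, F t y ≤ F t x) → x ∈ v := by
  rcases isEmpty_or_nonempty X with hX | hX
  · exact Eventually.of_forall fun _ x => isEmptyElim x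
  obtain ⟨x₀, hx₀, -⟩ := Continuous.exists_ciSup_eq (g := F t₀)
    (hF.comp_continuous (continuous_const.prodMk continuous_id) fun _ => ⟨ht₀, trivial⟩)
  -- off `v`, the point `x₀` beats every competitor at `t₀`, hence also nearby
  have hdiff : ContinuousOn (uncurry fun t x => F t x - F t x₀) (s ×ˢ univ) :=
    hF.sub (hF.comp (continuousOn_fst.prodMk continuousOn_const) fun p hp => ⟨hp.1, trivial⟩)
  obtain ⟨w, -, hvw, hnear⟩ := exists_isOpen_superset_eventually_lt hs hdiff ht₀
    hv.isClosed_compl.isCompact (c := 0) fun x hx => by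
      by_contra! hle
      exact hx (hmax x fun y => (hx₀ y).trans (sub_nonneg.1 hle))
  filter_upwards [hnear] with t ht x hx
  by_contra hxv
  exact (sub_neg.1 (ht x (hvw hxv))).not_ge (hx x₀)

end Maximizers

theorem Filter.Eventually.eventually_nhdsGT_forall_Icc {p : ℝ → Prop} {a : ℝ}
    (h : ∀ᶠ t in 𝓝 a, p t) : ∀ᶠ z in 𝓝[>] a, ∀ t ∈ Icc a z, p t := by
  obtain ⟨l, u, ⟨hl, hu⟩, hsub⟩ := h.exists_Ioo_subset
  filter_upwards [Ioo_mem_nhdsGT hu] with z hz t ht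
  exact hsub ⟨hl.trans_le ht.1, ht.2.trans_lt hz.2⟩

theorem eventually_slope_iSup_lt {X : Type*} [TopologicalSpace X] [CompactSpace X] [Nonempty X]
    {φ φt : ℝ → X → ℝ} {s : Set ℝ} (hs : IsOpen s)
    (hφ : ContinuousOn (uncurry φ) (s ×ˢ univ)) (hφt : ContinuousOn (uncurry φt) (s ×ˢ univ))
    (hderiv : ∀ t ∈ s, ∀ x, HasDerivAt (φ · x) (φt t x) t) {t₀ : ℝ} (ht₀ : t₀ ∈ s) {r : ℝ}
    (hr : ∀ x, (∀ y, φ t₀ y ≤ φ t₀ x) → φt t₀ x < r) :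
    ∀ᶠ t in 𝓝[>] t₀, slope (fun t => ⨆ x, φ t x) t₀ t < r := by
  have hslice : ∀ t ∈ s, Continuous (φ t) := fun t ht =>
    hφ.comp_continuous (continuous_const.prodMk continuous_id) fun _ => ⟨ht, trivial⟩
  have hK : IsCompact {x | ∀ y, φ t₀ y ≤ φ t₀ x} := by
    simp only [ofPred_forall]
    exact (isClosed_iInter fun y => isClosed_le continuous_const (hslice t₀ ht₀)).isCompact
  obtain ⟨v, hv, hKv, hφt_lt⟩ := exists_isOpen_superset_eventually_lt hs hφt ht₀ hK hr
  have hnear : ∀ᶠ t in 𝓝 t₀,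
      t ∈ s ∧ (∀ x ∈ v, φt t x < r) ∧ ∀ x, (∀ y, φ t y ≤ φ t x) → x ∈ v :=
    (hs.eventually_mem ht₀).and (hφt_lt.and (eventually_maximizers_subset hs hφ ht₀ hv hKv))
  filter_upwards [hnear.eventually_nhdsGT_forall_Icc, self_mem_nhdsWithin]
    with t hIcc (htt₀ : t₀ < t)
  obtain ⟨ht, -, hmax⟩ := hIcc t (right_mem_Icc.2 htt₀.le)
  obtain ⟨y, hy, hΦt⟩ := (hslice t ht).exists_ciSup_eq
  -- the maximum gains at most what its current maximizer `y` gains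
  obtain ⟨ξ, hξ, hslope⟩ := exists_hasDerivAt_eq_slope (φ · y) (φt · y) htt₀
    (fun τ hτ => (hderiv τ (hIcc τ hτ).1 y).continuousAt.continuousWithinAt)
    (fun τ hτ => hderiv τ (hIcc τ (Ioo_subset_Icc_self hτ)).1 y)
  have hle : φ t₀ y ≤ ⨆ x, φ t₀ x := le_ciSup (isCompact_range (hslice t₀ ht₀)).bddAbove y
  calc slope (fun t => ⨆ x, φ t x) t₀ t ≤ (φ t y - φ t₀ y) / (t - t₀) := by
        rw [slope_def_field, hΦt]
        gcongr
    _ = φt ξ y := hslope.symm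
    _ < r := (hIcc ξ (Ioo_subset_Icc_self hξ)).2.1 y (hmax y hy)

theorem sub_le_sub_of_liminf_slope_right_le_deriv {f B B' : ℝ → ℝ} {a b : ℝ} (hab : a ≤ b)
    (hf : ContinuousOn f (Icc a b)) (hB : ContinuousOn B (Icc a b))
    (hB' : ∀ x ∈ Ioo a b, HasDerivWithinAt B (B' x) (Ici x) x)
    (bound : ∀ x ∈ Ioo a b, ∀ r, B' x < r → ∃ᶠ z in 𝓝[>] x, slope f x z < r) :
    f b - f a ≤ B b - B a := by
  rcases hab.eq_or_lt with rfl | hab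
  · simp
  -- compare on `[a', b]` for every `a' > a`, then let `a' → a`
  have hshift : ∀ a' ∈ Ioc a b, f b - B b ≤ f a' - B a' := by
    intro a' ha'
    have hsub : Icc a' b ⊆ Icc a b := Icc_subset_Icc_left ha'.1.le
    have := image_le_of_liminf_slope_right_le_deriv_boundary (hf.mono hsub)
      (B := fun x => B x + (f a' - B a')) (by simp) ((hB.mono hsub).add continuousOn_const)
      (fun x hx => (hB' x ⟨ha'.1.trans_le hx.1, hx.2⟩).add_const _)
      (fun x hx => bound x ⟨ha'.1.trans_le hx.1, hx.2⟩) (right_mem_Icc.2 ha'.2)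
    linarith
  have hcont : ContinuousWithinAt (fun x => f x - B x) (Ioi a) a :=
    ((hf.sub hB) a (left_mem_Icc.2 hab.le)).mono_of_mem_nhdsWithin (Icc_mem_nhdsGT hab)
  have := ge_of_tendsto hcont (by filter_upwards [Ioc_mem_nhdsGT hab] using hshift)
  linarith

theorem hasDerivAt_integral_of_continuousOn_Icc {f : ℝ → ℝ} {a b x : ℝ}
    (hf : ContinuousOn f (Icc a b)) (hx : x ∈ Ioo a b) :
    HasDerivAt (fun u => ∫ y in a..u, f y) (f x) x :=
  intervalIntegral.integral_hasDerivAt_right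
    ((hf.mono (Icc_subset_Icc_right hx.2.le)).intervalIntegrable_of_Icc hx.1.le)
    ((hf.mono Ioo_subset_Icc_self).stronglyMeasurableAtFilter isOpen_Ioo x hx)
    (hf.continuousAt (Icc_mem_nhds hx.1 hx.2))

theorem stmt_4_general {X : Type*} [TopologicalSpace X] [CompactSpace X] [Nonempty X]
    (T : ℝ)
    (φ φt : ℝ → X → ℝ) (f : ℝ → ℝ)
    (hφcont : ContinuousOn (fun p : ℝ × X => φ p.1 p.2) (Set.Ico 0 T ×ˢ Set.univ))
    (hderiv : ∀ t ∈ Set.Ioo (0 : ℝ) T, ∀ x : X, HasDerivAt (fun s => φ s x) (φt t x) t)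
    (hφtcont : ContinuousOn (fun p : ℝ × X => φt p.1 p.2) (Set.Ioo 0 T ×ˢ Set.univ))
    (hfcont : ContinuousOn f (Set.Ico 0 T))
    (hmax : ∀ t ∈ Set.Ioo (0 : ℝ) T, ∀ x : X, (∀ y : X, φ t y ≤ φ t x) → φt t x ≤ f t) :
    ∀ t ∈ Set.Ico (0 : ℝ) T,
      (⨆ x : X, φ t x) ≤ (⨆ x : X, φ 0 x) + ∫ s in (0 : ℝ)..t, f s := by
  intro t ht
  have hsub : Icc 0 t ⊆ Ico 0 T := Icc_subset_Ico_right ht.2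
  have hf : ContinuousOn f (Icc 0 t) := hfcont.mono hsub
  have hprimitive : ContinuousOn (fun u => ∫ s in (0 : ℝ)..u, f s) (Icc 0 t) := by
    rw [← uIcc_of_le ht.1] at hf ⊢
    exact intervalIntegral.continuousOn_primitive_interval hf.integrableOn_uIcc
  have hslope : ∀ x ∈ Ioo 0 t, ∀ r, f x < r →
      ∃ᶠ z in 𝓝[>] x, slope (fun t => ⨆ y, φ t y) x z < r := fun x hx r hr =>
    (eventually_slope_iSup_lt isOpen_Ioo (hφcont.mono (prod_mono Ioo_subset_Ico_self le_rfl))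
      hφtcont hderiv ⟨hx.1, hx.2.trans ht.2⟩
      fun y hy => (hmax x ⟨hx.1, hx.2.trans ht.2⟩ y hy).trans_lt hr).frequently
  have hgrowth := sub_le_sub_of_liminf_slope_right_le_deriv ht.1
    ((continuousOn_iSup_of_compactSpace hφcont).mono hsub) hprimitive
    (fun x hx => (hasDerivAt_integral_of_continuousOn_Icc hf hx).hasDerivWithinAt) hslope
  simp only [intervalIntegral.integral_same, sub_zero] at hgrowth
  linarith

/-- a scalar maximum principle (Hamilton's trick). Let `X` be a nonempty
compact topological space, `T ∈ (0, ∞)`, and `φ : [0,T) × X → ℝ` continuous whose time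
derivative `φt = ∂φ/∂t` exists at every point of `(0,T) × X` and is continuous there.
Let `f : [0,T) → ℝ` be continuous, and suppose that for every `t ∈ (0,T)` and every
`x ∈ X` at which `φ t` attains its maximum over `X`, one has `φt t x ≤ f t`. Then for
every `t ∈ [0, T)`, `max_x φ t x ≤ max_x φ 0 x + ∫₀ᵗ f`. -/
theorem stmt_4 {X : Type*} [TopologicalSpace X] [CompactSpace X] [Nonempty X]
    (T : ℝ) (hT : 0 < T)
    (φ φt : ℝ → X → ℝ) (f : ℝ → ℝ)
    (hφcont : ContinuousOn (fun p : ℝ × X => φ p.1 p.2) (Set.Ico 0 T ×ˢ Set.univ))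
    (hderiv : ∀ t ∈ Set.Ioo (0 : ℝ) T, ∀ x : X, HasDerivAt (fun s => φ s x) (φt t x) t)
    (hφtcont : ContinuousOn (fun p : ℝ × X => φt p.1 p.2) (Set.Ioo 0 T ×ˢ Set.univ))
    (hfcont : ContinuousOn f (Set.Ico 0 T))
    (hmax : ∀ t ∈ Set.Ioo (0 : ℝ) T, ∀ x : X, (∀ y : X, φ t y ≤ φ t x) → φt t x ≤ f t) :
    ∀ t ∈ Set.Ico (0 : ℝ) T,
      (⨆ x : X, φ t x) ≤ (⨆ x : X, φ 0 x) + ∫ s in (0 : ℝ)..t, f s :=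
  stmt_4_general T φ φt f hφcont hderiv hφtcont hfcont hmax
end
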